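/- Let q ∈ {3, 5} and let G = Dic_q be the dicyclic group of order 4q. Let Γ be a finite simple graph on at most 4q + 4 vertices whose automorphism group is isomorphic to G, and let G act on the vertex set V(Γ) via a fixed isomorphism G ≅ Aut(Γ). Then no orbit of this action has size 4q = |G|. -/

import Mathlib

/-- The orbit of a vertex `v` under the action of `G` on the vertices of `Γ`
induced by an isomorphism `e : G ≃* Aut(Γ)`. -/
def autOrbit {G V : Type*} [Group G] {Γ : SimpleGraph V}
    (e : G ≃* (Γ ≃g Γ)) (v : V) : Set V :=
  Set.range fun g : G => e g v

/-!
Identify a regular orbit `O` with `Dic_q` via `g ↦ g • v`; its complement `R` has at most four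
vertices. Watkins' map `σ` (the identity on `⟨a⟩`, inversion on the other coset) satisfies
`(σ g)⁻¹ σ h = (g⁻¹ h)^{±1}`, so it preserves the graph induced on `O`, which is a Cayley graph
with an inverse-closed connection set. We extend `σ` to an automorphism of `Γ`; it fixes `v` but
moves `xa 0 • v`, which is impossible because `Aut Γ ≅ Dic_q` acts freely on `O`.

If the central involution `a q` fixes `R` pointwise, extend `σ` by the identity: `σ g` is `g` or
`a q * g`. Otherwise some `r ∈ R` has a stabilizer avoiding `a q`. For odd `q` every element
outside the kernel of `Dic_q → C₄` has `a q` among its powers, so the stabilizer lies in that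
kernel of index 4; as `|R| ≤ 4`, it is the kernel and `R ≅ C₄` is the orbit of `r`. There `σ`
extends by a reflection of `C₄`, chosen to preserve the edges between `O` and `R`: this works
because every subset of `C₄` is symmetric under some reflection.
-/

open Function MulAction

namespace QuaternionGroup

variable {n : ℕ}

lemma inv_a (i : ZMod (2 * n)) : (a i)⁻¹ = a (-i) := rfl

lemma inv_xa (i : ZMod (2 * n)) : (xa i)⁻¹ = xa ((n : ZMod (2 * n)) + i) := rfl

lemma natCast_add_natCast_self : (n + n : ZMod (2 * n)) = 0 := by
  rw [← two_mul]; exact_mod_cast ZMod.natCast_self (2 * n)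

def watkins : QuaternionGroup n → QuaternionGroup n
  | a i => a i
  | xa i => (xa i)⁻¹

@[simp] lemma watkins_a (i : ZMod (2 * n)) : watkins (a i) = a i := rfl

@[simp] lemma watkins_xa (i : ZMod (2 * n)) : watkins (xa i) = xa ((n : ZMod (2 * n)) + i) := rfl

lemma watkins_one : watkins (1 : QuaternionGroup n) = 1 := rfl

lemma watkins_involutive : Involutive (watkins (n := n))
  | a _ => rfl
  | xa i => inv_inv (xa i)

lemma watkins_xa_ne [NeZero n] (i : ZMod (2 * n)) : watkins (xa i) ≠ xa i := by
  have := NeZero.pos n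
  rw [watkins_xa, Ne, xa.injEq, add_eq_right, ZMod.natCast_eq_zero_iff]
  exact Nat.not_dvd_of_pos_of_lt this (by omega)

lemma watkins_eq_or_eq_a_mul : ∀ g : QuaternionGroup n, watkins g = g ∨ watkins g = a n * g
  | a _ => .inl rfl
  | xa i => .inr <| by
      rw [watkins_xa, a_mul_xa, xa.injEq]
      linear_combination (natCast_add_natCast_self (n := n))

lemma watkins_inv_mul_watkins (g h : QuaternionGroup n) :
    (watkins g)⁻¹ * watkins h = g⁻¹ * h ∨ (watkins g)⁻¹ * watkins h = (g⁻¹ * h)⁻¹ := by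
  rcases g with i | i <;> rcases h with j | j <;>
    simp only [watkins_a, watkins_xa, inv_a, inv_xa, a_mul_a, a_mul_xa, xa_mul_a, xa_mul_xa,
      xa.injEq, a.injEq]
  · exact .inl trivial
  · right; ring
  · right; ring
  · left; ring

lemma a_pow (i : ZMod (2 * n)) (k : ℕ) : a i ^ k = a ((k : ZMod (2 * n)) * i) := by
  induction k with
  | zero => simp [a_zero]
  | succ k ih => rw [pow_succ, ih, a_mul_a]; push_cast; ring_nf

/-- `i ↦ 2 i` from `ZMod (2 n)` to `ZMod 4`. -/
def doubleToZMod4 (n : ℕ) : ZMod (2 * n) →+ ZMod 4 :=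
  ZMod.lift (2 * n) ⟨zmultiplesHom (ZMod 4) 2, by
    simp only [zmultiplesHom_apply, zsmul_eq_mul]; push_cast; ring_nf; reduce_mod_char⟩

lemma doubleToZMod4_intCast (k : ℤ) : doubleToZMod4 n k = 2 * k := by
  simp [doubleToZMod4, ZMod.lift_coe, mul_comm]

lemma doubleToZMod4_add_self (i : ZMod (2 * n)) :
    doubleToZMod4 n i + doubleToZMod4 n i = 0 := by
  obtain ⟨k, rfl⟩ := ZMod.intCast_surjective i
  rw [doubleToZMod4_intCast]; ring_nf; reduce_mod_char

lemma doubleToZMod4_natCast (hn : Odd n) : doubleToZMod4 n n = 2 := by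
  obtain ⟨k, rfl⟩ := hn
  rw [← Int.cast_natCast, doubleToZMod4_intCast]; push_cast; ring_nf; reduce_mod_char

lemma natCast_mul_eq_of_doubleToZMod4_ne_zero {i : ZMod (2 * n)} (hi : doubleToZMod4 n i ≠ 0) :
    (n * i : ZMod (2 * n)) = n := by
  obtain ⟨k, rfl⟩ := ZMod.intCast_surjective i
  obtain ⟨m, rfl⟩ | ⟨m, rfl⟩ := Int.even_or_odd k
  · refine absurd ?_ hi
    rw [doubleToZMod4_intCast]; push_cast; ring_nf; reduce_mod_char
  · have := natCast_add_natCast_self (n := n)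
    push_cast
    linear_combination (m : ZMod (2 * n)) * this

/-- For odd `n`, the quotient map `Dic_n → Dic_n ⧸ ⟨a 2⟩ ≅ C₄`, sending `xa 0` to a generator. -/
def toZMod4 (hn : Odd n) : QuaternionGroup n →* Multiplicative (ZMod 4) where
  toFun
    | a i => .ofAdd (doubleToZMod4 n i)
    | xa i => .ofAdd (doubleToZMod4 n i + 1)
  map_one' := congrArg Multiplicative.ofAdd (map_zero _)
  map_mul' g h := by
    have := doubleToZMod4_natCast hn
    rcases g with i | i <;> rcases h with j | j <;>
      simp only [a_mul_a, a_mul_xa, xa_mul_a, xa_mul_xa, map_add, map_sub, ← ofAdd_add] <;>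
      congr 1
    · linear_combination -doubleToZMod4_add_self i
    · ring
    · linear_combination this - doubleToZMod4_add_self i

@[simp] lemma toZMod4_a (hn : Odd n) (i : ZMod (2 * n)) :
    toZMod4 hn (a i) = .ofAdd (doubleToZMod4 n i) := rfl

@[simp] lemma toZMod4_xa (hn : Odd n) (i : ZMod (2 * n)) :
    toZMod4 hn (xa i) = .ofAdd (doubleToZMod4 n i + 1) := rfl

lemma toZMod4_watkins (hn : Odd n) (g : QuaternionGroup n) :
    toZMod4 hn (watkins g) = (toZMod4 hn g)⁻¹ := by
  rcases g with i | i
  · simp only [watkins_a, toZMod4_a, ← ofAdd_neg]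
    congr 1; linear_combination doubleToZMod4_add_self i
  · rw [watkins, map_inv]

lemma toZMod4_surjective (hn : Odd n) : Surjective (toZMod4 hn) := by
  intro c
  obtain ⟨k, rfl⟩ := ZMod.natCast_zmod_surjective c.toAdd
  refine ⟨xa 0 ^ k, ?_⟩
  simp [map_pow, ← ofAdd_nsmul]
  rfl

lemma a_natCast_mem_zpowers (hn : Odd n) {g : QuaternionGroup n} (hg : toZMod4 hn g ≠ 1) :
    a n ∈ Subgroup.zpowers g := by
  rcases g with i | i
  · refine ⟨n, ?_⟩
    dsimp only
    rw [zpow_natCast, a_pow, natCast_mul_eq_of_doubleToZMod4_ne_zero]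
    simpa using hg
  · exact ⟨2, by simp [xa_sq]⟩

lemma le_ker_toZMod4 (hn : Odd n) {H : Subgroup (QuaternionGroup n)} (hH : a n ∉ H) :
    H ≤ (toZMod4 hn).ker := fun g hg => by
  by_contra hne
  exact hH (Subgroup.zpowers_le.2 hg (a_natCast_mem_zpowers hn hne))

lemma index_ker_toZMod4 (hn : Odd n) : (toZMod4 hn).ker.index = 4 := by
  rw [Subgroup.index_ker, MonoidHom.range_eq_top.2 (toZMod4_surjective hn)]
  simp

end QuaternionGroup

lemma exists_apply_div_eq_of_zmod_four (p : Multiplicative (ZMod 4) → Bool) :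
    ∃ d, ∀ t, p (d / t) = p t := by
  revert p; decide

namespace MulAction

variable {G V : Type*} [Group G] [MulAction G V]

lemma injective_smul_of_card_orbit [Finite G] {v : V} (h : Nat.card G ≤ Nat.card (orbit G v)) :
    Injective (· • v : G → V) := fun _ _ hgh =>
  (Set.rangeFactorization_surjective.bijective_of_nat_card_le h).injective (Subtype.ext hgh)

end MulAction

namespace SimpleGraph

variable {α V : Type*} {Γ : SimpleGraph V}

theorem exists_iso_extend {f : α → V} (hf : Injective f) {σ : α → α} (hσ : Involutive σ)
    {τ : V → V} (hτ : ∀ x ∉ Set.range f, τ (τ x) = x) (hτf : ∀ x ∉ Set.range f, τ x ∉ Set.range f)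
    (hff : ∀ a b, Γ.Adj (f (σ a)) (f (σ b)) ↔ Γ.Adj (f a) (f b))
    (hfτ : ∀ a, ∀ y ∉ Set.range f, Γ.Adj (f (σ a)) (τ y) ↔ Γ.Adj (f a) y)
    (hττ : ∀ x ∉ Set.range f, ∀ y ∉ Set.range f, Γ.Adj (τ x) (τ y) ↔ Γ.Adj x y) :
    ∃ φ : Γ ≃g Γ, ∀ a, φ (f a) = f (σ a) := by
  set φ := extend f (f ∘ σ) τ
  have hφf (a : α) : φ (f a) = f (σ a) := hf.extend_apply _ _ a
  have hφτ (x : V) (hx : x ∉ Set.range f) : φ x = τ x := extend_apply' _ _ _ hx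
  have hφ : Involutive φ := by
    intro x
    by_cases hx : x ∈ Set.range f
    · obtain ⟨a, rfl⟩ := hx
      rw [hφf, hφf, hσ]
    · rw [hφτ x hx, hφτ _ (hτf x hx), hτ x hx]
  refine ⟨⟨hφ.toPerm φ, fun {x y} => ?_⟩, hφf⟩
  simp only [Involutive.coe_toPerm]
  by_cases hx : x ∈ Set.range f <;> by_cases hy : y ∈ Set.range f
  · obtain ⟨a, rfl⟩ := hx; obtain ⟨b, rfl⟩ := hy
    rw [hφf, hφf, hff]
  · obtain ⟨a, rfl⟩ := hx
    rw [hφf, hφτ y hy, hfτ a y hy]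
  · obtain ⟨b, rfl⟩ := hy
    rw [hφf, hφτ x hx, Γ.adj_comm, hfτ b x hx, Γ.adj_comm]
  · rw [hφτ x hx, hφτ y hy, hττ x hx y hy]

section GraphAction

variable {G : Type*} [Group G] [MulAction G V]

lemma adj_smul_iff_adj_inv_smul (hΓ : ∀ (g : G) (x y : V), Γ.Adj (g • x) (g • y) ↔ Γ.Adj x y)
    (g : G) (x y : V) : Γ.Adj (g • x) y ↔ Γ.Adj x (g⁻¹ • y) := by
  rw [← hΓ g⁻¹, inv_smul_smul]

lemma adj_smul_smul_iff (hΓ : ∀ (g : G) (x y : V), Γ.Adj (g • x) (g • y) ↔ Γ.Adj x y)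
    (g h : G) (u : V) : Γ.Adj (g • u) (h • u) ↔ Γ.Adj u ((g⁻¹ * h) • u) := by
  rw [adj_smul_iff_adj_inv_smul hΓ, smul_smul]

lemma adj_inv_smul_iff (hΓ : ∀ (g : G) (x y : V), Γ.Adj (g • x) (g • y) ↔ Γ.Adj x y)
    (g : G) (u : V) : Γ.Adj u (g⁻¹ • u) ↔ Γ.Adj u (g • u) := by
  rw [← adj_smul_iff_adj_inv_smul hΓ, Γ.adj_comm]

lemma adj_smul_smul_iff_of_inv_mul {σ : G → G}
    (hΓ : ∀ (g : G) (x y : V), Γ.Adj (g • x) (g • y) ↔ Γ.Adj x y)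
    (hσ : ∀ g h, (σ g)⁻¹ * σ h = g⁻¹ * h ∨ (σ g)⁻¹ * σ h = (g⁻¹ * h)⁻¹) (g h : G) (u : V) :
    Γ.Adj (σ g • u) (σ h • u) ↔ Γ.Adj (g • u) (h • u) := by
  rw [adj_smul_smul_iff hΓ, adj_smul_smul_iff hΓ]
  rcases hσ g h with hgh | hgh <;> rw [hgh]
  exact adj_inv_smul_iff hΓ _ u

lemma eq_of_iso_smul_eq {v : V} (hv : Injective (· • v : G → V))
    (he : ∀ φ : Γ ≃g Γ, ∃ g : G, ∀ x, φ x = g • x) {σ : G → G} (hσ : σ 1 = 1)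
    {φ : Γ ≃g Γ} (hφ : ∀ g, φ (g • v) = σ g • v) (g : G) : σ g = g := by
  obtain ⟨g₀, hg₀⟩ := he φ
  have : g₀ = 1 := hv <| by simpa [hσ, hg₀] using hφ 1
  exact hv <| by simp [← hφ, hg₀, this]

end GraphAction

section Dicyclic

open QuaternionGroup

variable {n : ℕ} [MulAction (QuaternionGroup n) V]

lemma exists_iso_watkins_of_forall_a_smul_eq
    (hΓ : ∀ (g : QuaternionGroup n) (x y : V), Γ.Adj (g • x) (g • y) ↔ Γ.Adj x y)
    {v : V} (hv : Injective (· • v : QuaternionGroup n → V))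
    (hz : ∀ x ∉ orbit (QuaternionGroup n) v, (a n : QuaternionGroup n) • x = x) :
    ∃ φ : Γ ≃g Γ, ∀ g : QuaternionGroup n, φ (g • v) = watkins g • v := by
  refine exists_iso_extend hv watkins_involutive (fun _ _ => rfl) (fun _ hx => hx)
    (adj_smul_smul_iff_of_inv_mul hΓ watkins_inv_mul_watkins · · v) (fun g y hy => ?_)
    (fun _ _ _ _ => .rfl)
  rcases watkins_eq_or_eq_a_mul g with hg | hg
  · rw [hg]
  · rw [hg, mul_smul, ← hΓ (a n) (g • v) y, hz y hy]

lemma stabilizer_eq_ker_toZMod4 (hn : Odd n) [NeZero n] {r : V}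
    (hr : (a n : QuaternionGroup n) • r ≠ r) (h4 : (orbit (QuaternionGroup n) r).ncard ≤ 4) :
    stabilizer (QuaternionGroup n) r = (toZMod4 hn).ker := by
  have hle : stabilizer (QuaternionGroup n) r ≤ (toZMod4 hn).ker := le_ker_toZMod4 hn hr
  refine le_antisymm hle ((Subgroup.relIndex_eq_one).1 ?_)
  have hmul := Subgroup.relIndex_mul_index hle
  have hpos : (stabilizer (QuaternionGroup n) r).index ≠ 0 := Subgroup.FiniteIndex.index_ne_zero
  rw [index_ker_toZMod4] at hmul
  rw [← index_stabilizer] at h4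
  omega

lemma exists_iso_watkins_of_smul_eq_smul_iff (hn : Odd n)
    (hΓ : ∀ (g : QuaternionGroup n) (x y : V), Γ.Adj (g • x) (g • y) ↔ Γ.Adj x y)
    {v : V} (hv : Injective (· • v : QuaternionGroup n → V)) {r : V}
    (hr : orbit (QuaternionGroup n) r = (orbit (QuaternionGroup n) v)ᶜ)
    (hsmul : ∀ g h : QuaternionGroup n, g • r = h • r ↔ toZMod4 hn g = toZMod4 hn h) :
    ∃ φ : Γ ≃g Γ, ∀ g : QuaternionGroup n, φ (g • v) = watkins g • v := by
  classical
  have hcompl (x : V) :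
      x ∉ Set.range (· • v : QuaternionGroup n → V) ↔ ∃ g : QuaternionGroup n, g • r = x := by
    rw [← mem_orbit_iff, hr]; rfl
  set P : Multiplicative (ZMod 4) → Bool :=
    fun c => Γ.Adj v (surjInv (toZMod4_surjective hn) c • r)
  have hP (k : QuaternionGroup n) : Γ.Adj v (k • r) ↔ P (toZMod4 hn k) := by
    rw [(hsmul _ _).2 (surjInv_eq (toZMod4_surjective hn) (toZMod4 hn k)).symm, decide_eq_true_iff]
  obtain ⟨d, hd⟩ := exists_apply_div_eq_of_zmod_four P
  obtain ⟨t, rfl⟩ := toZMod4_surjective hn d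
  have hτ : FactorsThrough (fun g => (t * watkins g) • r) (· • r) := fun g h hgh => by
    rw [hsmul] at hgh ⊢
    simp [toZMod4_watkins, hgh]
  -- In the coordinate `toZMod4` on `R`, `τ` is the reflection `c ↦ d / c`.
  set τ := extend (· • r) (fun g => (t * watkins g) • r) id
  have hτr (g : QuaternionGroup n) : τ (g • r) = (t * watkins g) • r := hτ.extend_apply _ g
  refine exists_iso_extend (τ := τ) hv watkins_involutive ?_ ?_
    (adj_smul_smul_iff_of_inv_mul hΓ watkins_inv_mul_watkins · · v) ?_ ?_
  · rintro x hx
    obtain ⟨g, rfl⟩ := (hcompl x).1 hx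
    rw [hτr, hτr, hsmul]
    simp [toZMod4_watkins]
  · rintro x hx
    obtain ⟨g, rfl⟩ := (hcompl x).1 hx
    rw [hτr, hcompl]
    exact ⟨_, rfl⟩
  · rintro g y hy
    obtain ⟨h, rfl⟩ := (hcompl y).1 hy
    rw [hτr, adj_smul_iff_adj_inv_smul hΓ, adj_smul_iff_adj_inv_smul hΓ, smul_smul, smul_smul,
      hP, hP, ← hd (toZMod4 hn (g⁻¹ * h))]
    simp [toZMod4_watkins, div_eq_mul_inv, mul_comm, mul_left_comm]
  · rintro x hx y hy
    obtain ⟨g, rfl⟩ := (hcompl x).1 hx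
    obtain ⟨h, rfl⟩ := (hcompl y).1 hy
    rw [hτr, hτr, mul_smul, mul_smul, hΓ,
      adj_smul_smul_iff_of_inv_mul hΓ watkins_inv_mul_watkins]

lemma exists_iso_watkins_of_a_smul_ne (hn : Odd n) [Finite V]
    (hΓ : ∀ (g : QuaternionGroup n) (x y : V), Γ.Adj (g • x) (g • y) ↔ Γ.Adj x y)
    {v : V} (hv : Injective (· • v : QuaternionGroup n → V)) (hV : Nat.card V ≤ 4 * n + 4)
    {r : V} (hrv : r ∉ orbit (QuaternionGroup n) v) (hzr : (a n : QuaternionGroup n) • r ≠ r) :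
    ∃ φ : Γ ≃g Γ, ∀ g : QuaternionGroup n, φ (g • v) = watkins g • v := by
  have : NeZero n := ⟨hn.pos.ne'⟩
  have hcard : (orbit (QuaternionGroup n) v).ncard = 4 * n := by
    rw [← QuaternionGroup.card, ← Nat.card_eq_fintype_card]
    exact Set.ncard_range_of_injective hv
  have hcompl : (orbit (QuaternionGroup n) v)ᶜ.ncard ≤ 4 := by
    have := Set.ncard_add_ncard_compl (orbit (QuaternionGroup n) v)
    omega
  have hsub : orbit (QuaternionGroup n) r ⊆ (orbit (QuaternionGroup n) v)ᶜ := fun x hxr hxv =>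
    hrv (orbit_eq_iff.1 ((orbit_eq_iff.2 hxr).symm.trans (orbit_eq_iff.2 hxv)))
  have hstab := stabilizer_eq_ker_toZMod4 hn hzr ((Set.ncard_le_ncard hsub).trans hcompl)
  refine exists_iso_watkins_of_smul_eq_smul_iff hn hΓ hv
    (Set.eq_of_subset_of_ncard_le hsub ?_) fun g h => ?_
  · rwa [← index_stabilizer, hstab, index_ker_toZMod4]
  · rw [← inv_smul_eq_iff, smul_smul, ← mem_stabilizer_iff, hstab, MonoidHom.mem_ker, map_mul,
      map_inv, inv_mul_eq_one, eq_comm]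

end Dicyclic

end SimpleGraph

open QuaternionGroup

/-- Lemma: for `q ∈ {3, 5}`, if `G = Dic_q` (realised as `QuaternionGroup q`)
acts on the vertices of a graph `Γ` with at most `4q + 4` vertices via an
isomorphism `G ≃* Aut(Γ)`, then no orbit has size `4q = |G|`. -/
theorem dicyclic_no_regular_orbit (q : ℕ) (hq : q = 3 ∨ q = 5)
    (V : Type*) [Fintype V] (hV : Nat.card V ≤ 4 * q + 4)
    (Γ : SimpleGraph V) (e : QuaternionGroup q ≃* (Γ ≃g Γ)) :
    ∀ v : V, Nat.card (autOrbit e v) ≠ 4 * q := by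
  intro v hv
  have hodd : Odd q := by rcases hq with rfl | rfl <;> decide
  have : NeZero q := ⟨hodd.pos.ne'⟩
  let : MulAction (QuaternionGroup q) V := MulAction.compHom V e.toMonoidHom
  have hΓ (g : QuaternionGroup q) (x y : V) : Γ.Adj (g • x) (g • y) ↔ Γ.Adj x y :=
    (e g).map_adj_iff
  have hfree : Injective (· • v : QuaternionGroup q → V) :=
    injective_smul_of_card_orbit (by rw [Nat.card_eq_fintype_card, card]; exact hv.ge)
  obtain ⟨φ, hφ⟩ : ∃ φ : Γ ≃g Γ, ∀ g : QuaternionGroup q, φ (g • v) = watkins g • v := by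
    by_cases hz : ∀ x ∉ orbit (QuaternionGroup q) v, (a q : QuaternionGroup q) • x = x
    · exact SimpleGraph.exists_iso_watkins_of_forall_a_smul_eq hΓ hfree hz
    · push Not at hz
      obtain ⟨r, hrv, hzr⟩ := hz
      exact SimpleGraph.exists_iso_watkins_of_a_smul_ne hodd hΓ hfree hV hrv hzr
  have he (φ : Γ ≃g Γ) : ∃ g : QuaternionGroup q, ∀ x, φ x = g • x :=
    ⟨e.symm φ, fun x => (DFunLike.congr_fun (e.apply_symm_apply φ) x).symm⟩
  exact watkins_xa_ne 0 (SimpleGraph.eq_of_iso_smul_eq hfree he watkins_one hφ _)
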